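/- Normal form for FO[∼]: for every finite alphabet A = A_s ⊎ A_e and every sentence φ ∈ FO_A[∼], there exists B ∈ ℕ such that φ is equivalent, over all pairs (P,w) of a process triple P and a P-execution w, to a finite disjunction of finite conjunctions of formulas of the form ∃^{⋈m} y.(θ(y) ∧ ψ_{B,ℓ}(y)), where ⋈ ∈ {≥,=}, m ∈ ℕ, θ ∈ T = {s,e,se}, and ℓ ∈ {0,…,B}^A. -/

import Mathlib

namespace PSyn

/-! ### Basic objects: types, alphabets, processes, events, executions -/

/-- The three process types: system, environment, mixed. -/
inductive PType where
  | s | e | se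
deriving DecidableEq

/-- A finite alphabet: letters are the naturals `0, …, n-1`;
`sys a = true` means `a` is a system action (`a ∈ A_s`), otherwise `a ∈ A_e`. -/
structure Alphabet where
  n : ℕ
  sys : ℕ → Bool

/-- An event is a pair (letter, process identity). -/
abbrev Event := ℕ × ℕ

/-- A process triple `P = (P_s, P_e, P_se)`: pairwise disjoint finite sets of processes. -/
structure ProcTriple where
  Ps : Finset ℕ
  Pe : Finset ℕ
  Pse : Finset ℕ
  disj_se : Disjoint Ps Pe
  disj_sse : Disjoint Ps Pse
  disj_ese : Disjoint Pe Pse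

def ProcTriple.ofType (P : ProcTriple) : PType → Finset ℕ
  | .s => P.Ps
  | .e => P.Pe
  | .se => P.Pse

def ProcTriple.all (P : ProcTriple) : Finset ℕ := P.Ps ∪ P.Pe ∪ P.Pse

/-- `σ ∈ Σ_s = A_s × (P_s ∪ P_se)`. -/
def isSysEvent (Alph : Alphabet) (P : ProcTriple) (σ : Event) : Prop :=
  σ.1 < Alph.n ∧ Alph.sys σ.1 = true ∧ (σ.2 ∈ P.Ps ∨ σ.2 ∈ P.Pse)

/-- `σ ∈ Σ_e = A_e × (P_e ∪ P_se)`. -/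
def isEnvEvent (Alph : Alphabet) (P : ProcTriple) (σ : Event) : Prop :=
  σ.1 < Alph.n ∧ Alph.sys σ.1 = false ∧ (σ.2 ∈ P.Pe ∨ σ.2 ∈ P.Pse)

def isEvent (Alph : Alphabet) (P : ProcTriple) (σ : Event) : Prop :=
  isSysEvent Alph P σ ∨ isEnvEvent Alph P σ

/-- A finite or infinite word over events. -/
inductive Exec where
  | fin : List Event → Exec
  | inf : (ℕ → Event) → Exec

/-- A `P`-execution: every event is an event of `P` over the alphabet. -/
def Exec.valid (Alph : Alphabet) (P : ProcTriple) : Exec → Prop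
  | .fin l => ∀ σ ∈ l, isEvent Alph P σ
  | .inf g => ∀ i, isEvent Alph P (g i)

def Exec.at? : Exec → ℕ → Option Event
  | .fin l, i => l[i]?
  | .inf g, i => some (g i)

/-- The set of positions of an execution. -/
def Exec.posDom : Exec → ℕ → Prop
  | .fin l, i => i < l.length
  | .inf _, _ => True

/-- Elements of the structure associated with `(P, w)`:
`inl p` is a process, `inr i` is a position. -/
abbrev Elem := ℕ ⊕ ℕ

/-- The universe `P ⊎ Pos(w)`. -/
def elemDom (P : ProcTriple) (w : Exec) : Elem → Prop
  | .inl p => p ∈ P.all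
  | .inr i => w.posDom i

/-- The process an element belongs to (a process belongs to itself; a position
to the process executing it).  Two elements are `∼`-equivalent iff they have
the same process. -/
def procOf (w : Exec) : Elem → Option ℕ
  | .inl p => some p
  | .inr i => (w.at? i).map Prod.snd

def letterOf (w : Exec) : Elem → Option ℕ
  | .inl _ => none
  | .inr i => (w.at? i).map Prod.fst

/-! ### First-order logic FO_A[∼,<,+1] -/

/-- Syntax of `FO_A[∼,<,+1]`; variables are naturals, letters are naturals. -/
inductive FO where
  | ptype : PType → ℕ → FO
  | letter : ℕ → ℕ → FO
  | eq : ℕ → ℕ → FO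
  | sim : ℕ → ℕ → FO
  | lt : ℕ → ℕ → FO
  | succ : ℕ → ℕ → FO
  | not : FO → FO
  | or : FO → FO → FO
  | ex : ℕ → FO → FO

/-- Satisfaction of a formula in the structure `S_(P,w)` under a valuation. -/
def Sat (P : ProcTriple) (w : Exec) : (ℕ → Elem) → FO → Prop
  | v, .ptype θ x => ∃ p, v x = Sum.inl p ∧ p ∈ P.ofType θ
  | v, .letter a x => letterOf w (v x) = some a
  | v, .eq x y => v x = v y
  | v, .sim x y => (procOf w (v x)).isSome ∧ procOf w (v x) = procOf w (v y)
  | v, .lt x y => ∃ i j, v x = Sum.inr i ∧ v y = Sum.inr j ∧ i < j ∧ w.posDom j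
  | v, .succ x y => ∃ i, v x = Sum.inr i ∧ v y = Sum.inr (i + 1) ∧ w.posDom (i + 1)
  | v, .not φ => ¬ Sat P w v φ
  | v, .or φ ψ => Sat P w v φ ∨ Sat P w v ψ
  | v, .ex x φ => ∃ u : Elem, elemDom P w u ∧ Sat P w (Function.update v x u) φ

/-- Satisfaction for sentences: `(P,w) ⊨ φ` (the valuation is irrelevant for sentences). -/
def SatS (P : ProcTriple) (w : Exec) (φ : FO) : Prop :=
  Sat P w (fun _ => Sum.inl 0) φ

def FO.free : FO → Finset ℕ
  | .ptype _ x => {x}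
  | .letter _ x => {x}
  | .eq x y => {x, y}
  | .sim x y => {x, y}
  | .lt x y => {x, y}
  | .succ x y => {x, y}
  | .not φ => φ.free
  | .or φ ψ => φ.free ∪ ψ.free
  | .ex x φ => φ.free.erase x

/-- A sentence has no free variables. -/
def FO.isSentence (φ : FO) : Prop := φ.free = ∅

def FO.vars : FO → Finset ℕ
  | .ptype _ x => {x}
  | .letter _ x => {x}
  | .eq x y => {x, y}
  | .sim x y => {x, y}
  | .lt x y => {x, y}
  | .succ x y => {x, y}
  | .not φ => φ.vars
  | .or φ ψ => φ.vars ∪ ψ.vars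
  | .ex x φ => insert x φ.vars

/-- The two-variable fragment: only the variable names `0` and `1` are used. -/
def FO.twoVar (φ : FO) : Prop := φ.vars ⊆ ({0, 1} : Finset ℕ)

/-- The fragment `FO_A[∼]`: neither `<` nor `+1` occurs. -/
def FO.onlySim : FO → Prop
  | .lt _ _ => False
  | .succ _ _ => False
  | .not φ => φ.onlySim
  | .or φ ψ => φ.onlySim ∧ ψ.onlySim
  | .ex _ φ => φ.onlySim
  | _ => True

/-! ### The asynchronous synthesis game and `Win(φ)` -/

/-- A `P`-strategy for System: `none` plays ε, `some σ` proposes the system event `σ`. -/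
abbrev Strategy := List Event → Option Event

/-- The strategy only proposes system events (its codomain is `Σ_s ∪ {ε}`). -/
def properStrategy (Alph : Alphabet) (P : ProcTriple) (f : Strategy) : Prop :=
  ∀ u σ, f u = some σ → isSysEvent Alph P σ

/-- The prefix of length `i` of an execution. -/
def Exec.pre : Exec → ℕ → List Event
  | .fin l, i => l.take i
  | .inf g, i => (List.range i).map g

/-- `w` is `f`-compatible: every system event of `w` is the one proposed by `f`. -/
def compatible (Alph : Alphabet) (P : ProcTriple) (f : Strategy) (w : Exec) : Prop :=
  ∀ i σ, w.at? i = some σ → isSysEvent Alph P σ → f (w.pre i) = some σ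

/-- `w` is `f`-fair. -/
def fair (Alph : Alphabet) (P : ProcTriple) (f : Strategy) : Exec → Prop
  | .fin l => f l = none
  | .inf g =>
      {i : ℕ | f (Exec.pre (Exec.inf g) i) ≠ none}.Infinite →
      {j : ℕ | isSysEvent Alph P (g j)}.Infinite

/-- `f` is `P`-winning for `φ`. -/
def winningStrategy (Alph : Alphabet) (P : ProcTriple) (φ : FO) (f : Strategy) : Prop :=
  properStrategy Alph P f ∧
  ∀ w : Exec, w.valid Alph P → compatible Alph P f w → fair Alph P f w → SatS P w φ

/-- Triples of naturals, indexed by the process types (s, e, se). -/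
abbrev Tok := ℕ × ℕ × ℕ

/-- `Win(φ)`: the set of triples `(k_s, k_e, k_se)` admitting a winning System strategy. -/
def WinFO (Alph : Alphabet) (φ : FO) : Set Tok :=
  { k | ∃ P : ProcTriple,
      P.Ps.card = k.1 ∧ P.Pe.card = k.2.1 ∧ P.Pse.card = k.2.2 ∧
      ∃ f : Strategy, winningStrategy Alph P φ f }

/-! ### Parameterized vector games -/

/-- Locations: `L = {0,…,B}^A`. -/
abbrev Loc (n B : ℕ) := Fin n → Fin (B + 1)

/-- A local acceptance condition: for each process type a pair `(⋈, n)`,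
where the Boolean `true` stands for `=` and `false` for `≥`. -/
abbrev LCond := (Bool × ℕ) × (Bool × ℕ) × (Bool × ℕ)

/-- Configurations: `C : L → ℕ^T`. -/
abbrev GConfig (n B : ℕ) := Loc n B → Tok

/-- Transitions: maps `L × L → ℕ^T`. -/
abbrev GTrans (n B : ℕ) := Loc n B → Loc n B → Tok

/-- A parameterized vector game `G = (A, B, F)`. -/
structure PVG where
  Alph : Alphabet
  B : ℕ
  F : List (Loc Alph.n B → LCond)

def cmpHolds (c : Bool × ℕ) (m : ℕ) : Prop := if c.1 then m = c.2 else c.2 ≤ m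

def lcondHolds (κ : LCond) (t : Tok) : Prop :=
  cmpHolds κ.1 t.1 ∧ cmpHolds κ.2.1 t.2.1 ∧ cmpHolds κ.2.2 t.2.2

/-- `C ⊨ F`. -/
def accept (G : PVG) (C : GConfig G.Alph.n G.B) : Prop :=
  ∃ κ ∈ G.F, ∀ ℓ, lcondHolds (κ ℓ) (C ℓ)

/-- `ℓ + a`: increase coordinate `a` by one, capped at `B`. -/
def locAdd {n B : ℕ} (ℓ : Loc n B) (a : ℕ) : Loc n B :=
  fun i =>
    if (i : ℕ) = a then ⟨min ((ℓ i : ℕ) + 1) B, Nat.lt_succ_of_le (min_le_right _ _)⟩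
    else ℓ i

/-- `ℓ + w` for a finite word `w` over the alphabet. -/
def locAddW {n B : ℕ} (ℓ : Loc n B) : List ℕ → Loc n B
  | [] => ℓ
  | a :: u => locAddW (locAdd ℓ a) u

def isSysWord (Alph : Alphabet) (u : List ℕ) : Prop :=
  ∀ a ∈ u, a < Alph.n ∧ Alph.sys a = true

def isEnvWord (Alph : Alphabet) (u : List ℕ) : Prop :=
  ∀ a ∈ u, a < Alph.n ∧ Alph.sys a = false

/-- System transitions: values in `ℕ × {0} × ℕ` and moves along system words. -/
def isSysTrans (G : PVG) (τ : GTrans G.Alph.n G.B) : Prop :=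
  ∀ ℓ ℓ', (τ ℓ ℓ').2.1 = 0 ∧
    (τ ℓ ℓ' ≠ ((0, 0, 0) : Tok) → ∃ u : List ℕ, isSysWord G.Alph u ∧ ℓ' = locAddW ℓ u)

/-- Environment transitions: values in `{0} × ℕ × ℕ` and moves along environment words. -/
def isEnvTrans (G : PVG) (τ : GTrans G.Alph.n G.B) : Prop :=
  ∀ ℓ ℓ', (τ ℓ ℓ').1 = 0 ∧
    (τ ℓ ℓ' ≠ ((0, 0, 0) : Tok) → ∃ u : List ℕ, isEnvWord G.Alph u ∧ ℓ' = locAddW ℓ u)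

def outm {n B : ℕ} (τ : GTrans n B) (ℓ : Loc n B) : Tok := ∑ ℓ' : Loc n B, τ ℓ ℓ'

def inm {n B : ℕ} (τ : GTrans n B) (ℓ : Loc n B) : Tok := ∑ ℓ' : Loc n B, τ ℓ' ℓ

/-- Componentwise order on `ℕ^T`. -/
def tokLe (s t : Tok) : Prop := s.1 ≤ t.1 ∧ s.2.1 ≤ t.2.1 ∧ s.2.2 ≤ t.2.2

def applicable {n B : ℕ} (τ : GTrans n B) (C : GConfig n B) : Prop :=
  ∀ ℓ, tokLe (outm τ ℓ) (C ℓ)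

/-- `τ(C)(ℓ) = C(ℓ) − out_τ(ℓ) + in_τ(ℓ)` (componentwise). -/
def applyT {n B : ℕ} (τ : GTrans n B) (C : GConfig n B) : GConfig n B :=
  fun ℓ => C ℓ - outm τ ℓ + inm τ ℓ

/-- The configuration reached from `C0` after applying the transitions `ts` in order. -/
def confAt {n B : ℕ} (C0 : GConfig n B) (ts : List (GTrans n B)) : GConfig n B :=
  ts.foldl (fun C τ => applyT τ C) C0

/-- A valid `C0`-play, represented by its list of transitions
(step `i`, 0-based, is System's if `i` is even, Environment's if `i` is odd). -/
def validPlay (G : PVG) (C0 : GConfig G.Alph.n G.B)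
    (ts : List (GTrans G.Alph.n G.B)) : Prop :=
  ∀ i (h : i < ts.length),
    applicable (ts.get ⟨i, h⟩) (confAt C0 (ts.take i)) ∧
    (i % 2 = 0 → isSysTrans G (ts.get ⟨i, h⟩) ∧ accept G (confAt C0 (ts.take (i + 1)))) ∧
    (i % 2 = 1 → isEnvTrans G (ts.get ⟨i, h⟩) ∧ ¬ accept G (confAt C0 (ts.take (i + 1))))

/-- A strategy for System in the game: a partial map from plays to transitions. -/
abbrev GStrat (n B : ℕ) := List (GTrans n B) → Option (GTrans n B)

/-- `f(C)` is defined, and whenever `f(π) = τ` for a valid play π ending in `C_i`,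
`τ` is a system transition, applicable at `C_i`, and `τ(C_i) ⊨ F`. -/
def properGStrat (G : PVG) (C0 : GConfig G.Alph.n G.B) (f : GStrat G.Alph.n G.B) : Prop :=
  (f []).isSome ∧
  ∀ ts τ, validPlay G C0 ts → f ts = some τ →
    isSysTrans G τ ∧ applicable τ (confAt C0 ts) ∧ accept G (applyT τ (confAt C0 ts))

def gCompatible {n B : ℕ} (f : GStrat n B) (ts : List (GTrans n B)) : Prop :=
  ∀ i (h : i < ts.length), i % 2 = 0 → f (ts.take i) = some (ts.get ⟨i, h⟩)

def gMaximal (G : PVG) (C0 : GConfig G.Alph.n G.B) (f : GStrat G.Alph.n G.B)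
    (ts : List (GTrans G.Alph.n G.B)) : Prop :=
  ¬ ∃ ts', ts <+: ts' ∧ ts ≠ ts' ∧ validPlay G C0 ts' ∧ gCompatible f ts'

def winningGStrat (G : PVG) (C0 : GConfig G.Alph.n G.B) (f : GStrat G.Alph.n G.B) : Prop :=
  properGStrat G C0 f ∧
  ∀ ts, validPlay G C0 ts → gCompatible f ts → gMaximal G C0 f ts →
    accept G (confAt C0 ts)

/-- A configuration is winning for System if System has a winning strategy from it. -/
def winningConf (G : PVG) (C0 : GConfig G.Alph.n G.B) : Prop :=
  ∃ f, winningGStrat G C0 f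

/-- The all-zero location `ℓ_0`. -/
def loc0 (n B : ℕ) : Loc n B := fun _ => 0

/-- `C_k⃗`: all `k⃗` tokens on `ℓ_0`. -/
def initConfig {n B : ℕ} (k : Tok) : GConfig n B :=
  Function.update (fun _ => ((0, 0, 0) : Tok)) (loc0 n B) k

/-- `Win(G)`. -/
def WinG (G : PVG) : Set Tok :=
  { k | winningConf G (initConfig k) }

/-! ### Environment chains and constants of a game -/

/-- `C <_e C'`. -/
def envStep (G : PVG) (C C' : GConfig G.Alph.n G.B) : Prop :=
  C ≠ C' ∧ ∃ τ, isEnvTrans G τ ∧ applicable τ C ∧ C' = applyT τ C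

/-- There is a chain `C = C_0 <_e C_1 <_e … <_e C_d`. -/
def hasChain (G : PVG) (C : GConfig G.Alph.n G.B) (d : ℕ) : Prop :=
  ∃ cs : ℕ → GConfig G.Alph.n G.B, cs 0 = C ∧ ∀ i < d, envStep G (cs i) (cs (i + 1))

/-- `C ∈ Conf_d`: the longest `<_e`-chain starting in `C` has length exactly `d`. -/
def ConfD (G : PVG) (C : GConfig G.Alph.n G.B) (d : ℕ) : Prop :=
  hasChain G C d ∧ ¬ hasChain G C (d + 1)

def lcondMax (κ : LCond) : ℕ := max κ.1.2 (max κ.2.1.2 κ.2.2.2)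

/-- `K`: the largest constant occurring in the acceptance condition `F`. -/
def maxConst (G : PVG) : ℕ :=
  (G.F.map fun κ => Finset.univ.sup fun ℓ : Loc G.Alph.n G.B => lcondMax (κ ℓ)).foldr max 0

/-- `|A_e|`: the number of environment letters. -/
def envCard (Alph : Alphabet) : ℕ :=
  ((Finset.range Alph.n).filter fun a => Alph.sys a = false).card

/-- `|L| = (B+1)^|A|`. -/
def numLoc (G : PVG) : ℕ := (G.B + 1) ^ G.Alph.n

/-! ### Cutoffs -/

/-- `k⃗_0` is a cutoff of `W` with respect to `(N_s, N_e, N_se)`. -/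
def IsCutoff (Ns Ne Nse : Set ℕ) (W : Set Tok) (k0 : Tok) : Prop :=
  k0.1 ∈ Ns ∧ k0.2.1 ∈ Ne ∧ k0.2.2 ∈ Nse ∧
  ((∀ k : Tok, k.1 ∈ Ns → k.2.1 ∈ Ne → k.2.2 ∈ Nse →
      k0.1 ≤ k.1 → k0.2.1 ≤ k.2.1 → k0.2.2 ≤ k.2.2 → k ∈ W) ∨
   (∀ k : Tok, k.1 ∈ Ns → k.2.1 ∈ Ne → k.2.2 ∈ Nse →
      k0.1 ≤ k.1 → k0.2.1 ≤ k.2.1 → k0.2.2 ≤ k.2.2 → k ∉ W))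

/-! ### Counting formulas and the normal form for FO[∼] -/

def FO.and (φ ψ : FO) : FO := FO.not (FO.or (FO.not φ) (FO.not ψ))

def FO.imp (φ ψ : FO) : FO := FO.or (FO.not φ) ψ

def FO.iff (φ ψ : FO) : FO := FO.and (φ.imp ψ) (ψ.imp φ)

def FO.all (x : ℕ) (φ : FO) : FO := FO.not (FO.ex x (FO.not φ))

def trueFO : FO := FO.eq 0 0

def bigAnd (l : List FO) : FO := l.foldr FO.and trueFO

def bigOr (l : List FO) : FO := l.foldr FO.or (FO.not trueFO)

/-- `∃^{≥m} y. (mk y)`: there are at least `m` distinct witnesses; the witness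
variables are `base, base+1, …, base+m-1`. -/
def exGe (m base : ℕ) (mk : ℕ → FO) : FO :=
  let distinct : List FO :=
    (List.range m).flatMap fun i =>
      ((List.range m).filter fun j => decide (i < j)).map fun j =>
        FO.not (FO.eq (base + i) (base + j))
  let body : FO :=
    FO.and (bigAnd distinct) (bigAnd ((List.range m).map fun i => mk (base + i)))
  ((List.range m).map (base + ·)).foldr FO.ex body

/-- `∃^{=m} y. (mk y) := ∃^{≥m} y. (mk y) ∧ ¬ ∃^{≥m+1} y. (mk y)`. -/
def exEq (m base : ℕ) (mk : ℕ → FO) : FO :=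
  FO.and (exGe m base mk) (FO.not (exGe (m + 1) base mk))

/-- `ψ_{B,ℓ}(y)`: in the class of `y`, each letter `a` occurs exactly `ℓ(a)` times
if `ℓ(a) < B`, and at least `ℓ(a)` times if `ℓ(a) = B`. -/
def psiCount (n B : ℕ) (ℓ : ℕ → ℕ) (y : ℕ) : FO :=
  bigAnd ((List.range n).map fun a =>
    if ℓ a < B then
      exEq (ℓ a) (y + 1) (fun z => FO.and (FO.sim y z) (FO.letter a z))
    else
      exGe (ℓ a) (y + 1) (fun z => FO.and (FO.sim y z) (FO.letter a z)))

/-- `∃^{⋈m} y. (θ(y) ∧ ψ_{B,ℓ}(y))`, where `⋈` is `=` if `isEq` and `≥` otherwise. -/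
def nfAtom (n B : ℕ) (isEq : Bool) (m : ℕ) (θ : PType) (ℓ : ℕ → ℕ) : FO :=
  let mk : ℕ → FO := fun y => FO.and (FO.ptype θ y) (psiCount n B ℓ y)
  if isEq then exEq m 0 mk else exGe m 0 mk

/-! ### The normalized synthesis problem -/

/-- A normalized strategy: maps finite executions to finite system words. -/
abbrev NormStrategy := List Event → Option (List Event)

/-- A normalized `P`-execution, given by its block decomposition `bs`
(`bs[j]` with `j` even is a System block, `j` odd an Environment block;
this corresponds to the 1-based indexing `w = w_1 … w_n` of the paper). -/
def NormExec (Alph : Alphabet) (P : ProcTriple) (φ : FO) (bs : List (List Event)) : Prop :=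
  1 ≤ bs.length ∧
  ∀ j (h : j < bs.length),
    (j % 2 = 0 → (∀ σ ∈ bs.get ⟨j, h⟩, isSysEvent Alph P σ) ∧
        SatS P (Exec.fin ((bs.take (j + 1)).flatten)) φ) ∧
    (j % 2 = 1 → (∀ σ ∈ bs.get ⟨j, h⟩, isEnvEvent Alph P σ) ∧
        ¬ SatS P (Exec.fin ((bs.take (j + 1)).flatten)) φ)

/-- Properness of a normalized strategy: `f(ε)` is defined, outputs are system
words, and `(P, w · f(w)) ⊨ φ` whenever `f(w)` is defined. -/
def properNStrat (Alph : Alphabet) (P : ProcTriple) (φ : FO) (f : NormStrategy) : Prop :=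
  (f []).isSome ∧
  ∀ w u, f w = some u →
    (∀ σ ∈ u, isSysEvent Alph P σ) ∧ SatS P (Exec.fin (w ++ u)) φ

def nCompatible (f : NormStrategy) (bs : List (List Event)) : Prop :=
  ∀ j (h : j < bs.length), j % 2 = 0 → f ((bs.take j).flatten) = some (bs.get ⟨j, h⟩)

def nMaximal (Alph : Alphabet) (P : ProcTriple) (φ : FO) (f : NormStrategy)
    (bs : List (List Event)) : Prop :=
  ¬ ∃ bs', bs <+: bs' ∧ bs ≠ bs' ∧ NormExec Alph P φ bs' ∧ nCompatible f bs'

def winningNStrategy (Alph : Alphabet) (P : ProcTriple) (φ : FO) (f : NormStrategy) : Prop :=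
  properNStrat Alph P φ f ∧
  ∀ bs, NormExec Alph P φ bs → nCompatible f bs → nMaximal Alph P φ f bs →
    SatS P (Exec.fin bs.flatten) φ

/-- `NWin(φ)`. -/
def NWin (Alph : Alphabet) (φ : FO) : Set Tok :=
  { k | ∃ P : ProcTriple,
      P.Ps.card = k.1 ∧ P.Pe.card = k.2.1 ∧ P.Pse.card = k.2.2 ∧
      ∃ f : NormStrategy, winningNStrategy Alph P φ f }

/-! ### Concrete alphabet and formulas of the examples -/

/-- The alphabet with `A_s = {a, b} = {0, 1}` and `A_e = {c, d} = {2, 3}`. -/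
def alph4 : Alphabet := ⟨4, fun a => decide (a < 2)⟩

/-- `φ_1 = ∀x.((s(x) ∨ se(x)) → ∃y.(x∼y ∧ (a(y) ∨ b(y))))`. -/
def phi1 : FO :=
  FO.all 0 (FO.imp (FO.or (FO.ptype .s 0) (FO.ptype .se 0))
    (FO.ex 1 (FO.and (FO.sim 0 1) (FO.or (FO.letter 0 1) (FO.letter 1 1)))))

/-- `φ_4 = ∀x.((∃^{=2}y.(x∼y ∧ a(y))) ↔ (∃^{=2}y.(x∼y ∧ d(y))))`. -/
def phi4 : FO :=
  FO.all 0 (FO.iff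
    (exEq 2 1 fun y => FO.and (FO.sim 0 y) (FO.letter 0 y))
    (exEq 2 1 fun y => FO.and (FO.sim 0 y) (FO.letter 3 y)))

/-- Vectors `{0,…,3}^{4}` as functions `ℕ → ℕ`. -/
def vec4 (v0 v1 v2 v3 : ℕ) : ℕ → ℕ := fun i => [v0, v1, v2, v3].getD i 0

def allVecs4 : List (ℕ → ℕ) :=
  (List.range 4).flatMap fun v0 =>
    (List.range 4).flatMap fun v1 =>
      (List.range 4).flatMap fun v2 =>
        (List.range 4).map fun v3 => vec4 v0 v1 v2 v3

/-- `Z`: vectors with `ℓ(a) = 2 ≠ ℓ(d)` or `ℓ(d) = 2 ≠ ℓ(a)` (letters `a = 0`, `d = 3`). -/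
def Zvecs : List (ℕ → ℕ) :=
  allVecs4.filter fun ℓ => decide ((ℓ 0 = 2 ∧ ℓ 3 ≠ 2) ∨ (ℓ 3 = 2 ∧ ℓ 0 ≠ 2))

/-- `φ_4' = ⋀_{θ ∈ T, ℓ ∈ Z} ∃^{=0} y.(θ(y) ∧ ψ_{3,ℓ}(y))`. -/
def phi4' : FO :=
  bigAnd (([PType.s, PType.e, PType.se].flatMap fun θ =>
    Zvecs.map fun ℓ => nfAtom 4 3 true 0 θ ℓ))

/-! ### Effective encodings of inputs (for decidability statements) -/

def decodePType (k : ℕ) : PType :=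
  if k % 3 = 0 then .s else if k % 3 = 1 then .e else .se

/-- Surjective decoding of formulas from naturals (with fuel). -/
def decodeFOAux : ℕ → ℕ → FO
  | 0, _ => FO.eq 0 0
  | fuel + 1, c =>
    let t := c % 9
    let m := c / 9
    let a := m.unpair.1
    let b := m.unpair.2
    if t = 0 then FO.ptype (decodePType a) b
    else if t = 1 then FO.letter a b
    else if t = 2 then FO.eq a b
    else if t = 3 then FO.sim a b
    else if t = 4 then FO.lt a b
    else if t = 5 then FO.succ a b
    else if t = 6 then FO.not (decodeFOAux fuel m)
    else if t = 7 then FO.or (decodeFOAux fuel a) (decodeFOAux fuel b)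
    else FO.ex a (decodeFOAux fuel b)

def decodeFO (c : ℕ) : FO := decodeFOAux c c

/-- Decoding an input of the synthesis/satisfiability problems: an alphabet
(size and partition) together with a formula. -/
def decodeFOInput (c : ℕ) : Alphabet × FO :=
  (⟨c.unpair.1.unpair.1, fun a => (c.unpair.1.unpair.2).testBit a⟩, decodeFO c.unpair.2)

def decodeBN (m : ℕ) : Bool × ℕ := (decide (m % 2 = 0), m / 2)

def decodeLCond (m : ℕ) : LCond :=
  (decodeBN m.unpair.1, decodeBN m.unpair.2.unpair.1, decodeBN m.unpair.2.unpair.2)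

/-- An explicit index of a location, used to decode local acceptance conditions. -/
def locIndex {n B : ℕ} (ℓ : Loc n B) : ℕ := ∑ i : Fin n, (ℓ i : ℕ) * (B + 1) ^ (i : ℕ)

/-- Decoding a parameterized vector game from a natural number. -/
def decodeGame (c : ℕ) : PVG :=
  let n := c.unpair.1.unpair.1
  let sy := c.unpair.1.unpair.2
  let B := c.unpair.2.unpair.1
  let Fc := c.unpair.2.unpair.2
  { Alph := ⟨n, fun a => sy.testBit a⟩
    B := B
    F := (Denumerable.ofNat (List ℕ) Fc).map fun kc =>
      fun ℓ => decodeLCond ((Denumerable.ofNat (List ℕ) kc).getD (locIndex ℓ) 0) }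


/-!
For `FO[∼]` the structure of `(P, w)` is a disjoint union of classes, one per process, and a
class is determined up to isomorphism by its process type and its letter counts. Call the
*profile* of `(P, w)` the function giving, for each type `θ` and each vector `ℓ` of letter counts
capped at `k`, the number of classes of type `θ` with capped counts `ℓ`, itself capped at `k`.
Two structures with the same profile satisfy the same sentences of quantifier rank at most `k`:
in the Ehrenfeucht–Fraïssé game Duplicator answers a move in an already visited class inside the
partner class and a move in a new class inside a new class with the same capped description,
and the caps suffice because at most `k` elements are ever pebbled. A profile takes finitely
many values and is pinned down by a conjunction of atoms `∃^{⋈m} y. (θ(y) ∧ ψ_{k,ℓ}(y))`, so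
`φ` is equivalent to the disjunction over the profiles of its models.
-/

section Finite

variable {α β : Type*}

lemma exists_mem_notMem_of_card_lt_encard {S : Set α} (T : Finset α)
    (h : (T.card : ℕ∞) < S.encard) : ∃ x ∈ S, x ∉ T := by
  by_contra! hST
  exact (Set.encard_le_encard hST).not_gt (by simpa using h)

lemma exists_nodup_iff_le_encard {m : ℕ} (S : Set α) :
    (∃ l : List α, l.length = m ∧ l.Nodup ∧ ∀ x ∈ l, x ∈ S) ↔
      (m : ℕ∞) ≤ S.encard := by
  classical
  constructor
  · rintro ⟨l, rfl, hnd, hS⟩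
    calc (l.length : ℕ∞) = (l.toFinset : Set α).encard := by
          rw [Set.encard_coe_eq_coe_finsetCard, List.toFinset_card_of_nodup hnd]
      _ ≤ S.encard := Set.encard_le_encard fun x hx => hS x (by simpa using hx)
  · intro h
    obtain ⟨T, hTS, hT⟩ := Set.exists_subset_encard_eq h
    have hfin : T.Finite := Set.finite_of_encard_eq_coe hT
    refine ⟨hfin.toFinset.toList, ?_, hfin.toFinset.nodup_toList,
      fun x hx => hTS (by simpa using hx)⟩
    rw [Finset.length_toList, ← Nat.cast_inj (R := ℕ∞), ← hT,
      hfin.encard_eq_coe_toFinset_card]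

lemma card_filter_map_fst_eq [DecidableEq α] [DecidableEq β]
    {G : List (α × β)} (hG : ∀ x ∈ G, ∀ y ∈ G, x.1 = y.1 ↔ x.2 = y.2)
    {s : α → Prop} {s' : β → Prop} [DecidablePred s] [DecidablePred s']
    (hs : ∀ x ∈ G, s x.1 ↔ s' x.2) :
    ((G.map Prod.fst).toFinset.filter s).card = ((G.map Prod.snd).toFinset.filter s').card := by
  have h₁ : (G.map Prod.fst).toFinset = G.toFinset.image Prod.fst := by ext; simp
  have h₂ : (G.map Prod.snd).toFinset = G.toFinset.image Prod.snd := by ext; simp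
  rw [h₁, h₂, Finset.filter_image, Finset.filter_image,
    Finset.card_image_of_injOn, Finset.card_image_of_injOn,
    Finset.filter_congr fun x hx => hs x (List.mem_toFinset.1 hx)]
  · intro x hx y hy h
    simp only [Finset.coe_filter, List.mem_toFinset, Set.mem_ofPred_eq] at hx hy
    exact Prod.ext ((hG x hx.1 y hy.1).2 h) h
  · intro x hx y hy h
    simp only [Finset.coe_filter, List.mem_toFinset, Set.mem_ofPred_eq] at hx hy
    exact Prod.ext h ((hG x hx.1 y hy.1).1 h)

lemma card_filter_toFinset_map_le [DecidableEq β] (G : List α) (f : α → β)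
    (s : β → Prop) [DecidablePred s] : ((G.map f).toFinset.filter s).card ≤ G.length :=
  (Finset.card_filter_le _ _).trans ((List.toFinset_card_le _).trans (List.length_map f).le)

end Finite

namespace ProcTriple

variable {P : ProcTriple} {p : ℕ}

lemma mem_all_iff : p ∈ P.all ↔ ∃ θ, p ∈ P.ofType θ := by
  simp only [all, Finset.mem_union]
  constructor
  · rintro ((h | h) | h)
    exacts [⟨.s, h⟩, ⟨.e, h⟩, ⟨.se, h⟩]
  · rintro ⟨θ, h⟩
    cases θ <;> simp_all [ofType]

lemma eq_of_mem_ofType {θ θ' : PType} (h : p ∈ P.ofType θ) (h' : p ∈ P.ofType θ') :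
    θ = θ' := by
  have hse := Finset.disjoint_left.1 P.disj_se
  have hsse := Finset.disjoint_left.1 P.disj_sse
  have hese := Finset.disjoint_left.1 P.disj_ese
  cases θ <;> cases θ' <;> simp_all [ofType]

end ProcTriple

section Elements

variable {Alph : Alphabet} {P : ProcTriple} {w : Exec}

def positionsWith (w : Exec) (p a : ℕ) : Set Elem :=
  {e | procOf w e = some p ∧ letterOf w e = some a}

lemma exists_at?_of_elemDom_inr {i : ℕ} (h : elemDom P w (.inr i)) :
    ∃ σ, w.at? i = some σ := by
  cases w with
  | fin l => exact ⟨_, List.getElem?_eq_getElem h⟩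
  | inf g => exact ⟨_, rfl⟩

lemma isEvent_of_at? (hv : w.valid Alph P) {i : ℕ} {σ : Event} (h : w.at? i = some σ) :
    isEvent Alph P σ := by
  cases w with
  | fin l => exact hv σ (List.mem_of_getElem? h)
  | inf g => exact (Option.some_inj.1 h) ▸ hv i

lemma elemDom_of_letterOf_eq_some {e : Elem} {a : ℕ} (h : letterOf w e = some a) :
    elemDom P w e := by
  rcases e with _ | i
  · simp [letterOf] at h
  · obtain ⟨σ, hσ, -⟩ := Option.map_eq_some_iff.1 h
    cases w with
    | fin l => exact (List.getElem?_eq_some_iff.1 hσ).1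
    | inf g => trivial

lemma eq_inl_of_letterOf_eq_none {e : Elem} {p : ℕ} (hl : letterOf w e = none)
    (hp : procOf w e = some p) : e = .inl p := by
  rcases e with q | i
  · simpa [procOf] using hp
  · simp_all [letterOf, procOf]

lemma procOf_isSome_of_elemDom {e : Elem} (h : elemDom P w e) : (procOf w e).isSome := by
  rcases e with q | i
  · rfl
  · obtain ⟨σ, hσ⟩ := exists_at?_of_elemDom_inr h
    simp [procOf, hσ]

lemma procOf_mem_all (hv : w.valid Alph P) {e : Elem} {q : ℕ} (hd : elemDom P w e)
    (h : procOf w e = some q) : q ∈ P.all := by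
  rcases e with p | i
  · exact Option.some_inj.1 h ▸ hd
  · obtain ⟨σ, hσ, rfl⟩ := Option.map_eq_some_iff.1 h
    rcases isEvent_of_at? hv hσ with ⟨-, -, h | h⟩ | ⟨-, -, h | h⟩ <;>
      simp [ProcTriple.all, h]

lemma letter_lt_of_letterOf_eq_some (hv : w.valid Alph P) {e : Elem} {a : ℕ}
    (h : letterOf w e = some a) : a < Alph.n := by
  rcases e with p | i
  · simp [letterOf] at h
  · obtain ⟨σ, hσ, rfl⟩ := Option.map_eq_some_iff.1 h
    rcases isEvent_of_at? hv hσ with ⟨h, -⟩ | ⟨h, -⟩ <;> exact h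

lemma letterOf_isSome_of_elemDom_inr {i : ℕ} (h : elemDom P w (.inr i)) :
    (letterOf w (.inr i)).isSome := by
  obtain ⟨σ, hσ⟩ := exists_at?_of_elemDom_inr h
  simp [letterOf, hσ]

end Elements

section CappedCount

variable {k m : ℕ} {w : Exec} {p a : ℕ}

noncomputable def capCount (k : ℕ) (w : Exec) (p a : ℕ) : ℕ :=
  (min (k : ℕ∞) (positionsWith w p a).encard).toNat

lemma coe_capCount : (capCount k w p a : ℕ∞) = min (k : ℕ∞) (positionsWith w p a).encard :=
  ENat.natCast_toNat (ne_top_of_le_ne_top (ENat.natCast_ne_top k) (min_le_left _ _))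

lemma capCount_le : capCount k w p a ≤ k := by
  rw [← Nat.cast_le (α := ℕ∞), coe_capCount]
  exact min_le_left _ _

lemma le_capCount_iff (hm : m ≤ k) :
    m ≤ capCount k w p a ↔ (m : ℕ∞) ≤ (positionsWith w p a).encard := by
  rw [← Nat.cast_le (α := ℕ∞), coe_capCount, le_min_iff]
  simp [hm]

lemma capCount_eq_iff_of_lt (hm : m < k) :
    capCount k w p a = m ↔ (positionsWith w p a).encard = m := by
  rw [← Nat.cast_inj (R := ℕ∞), coe_capCount]
  constructor
  · intro h
    rcases min_choice (k : ℕ∞) (positionsWith w p a).encard with hk | hE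
    · rw [hk] at h; exact absurd (Nat.cast_inj.1 h) hm.ne'
    · rwa [hE] at h
  · intro h
    rw [h, min_eq_right (Nat.cast_le.2 hm.le)]

lemma capCount_eq_self_iff :
    capCount k w p a = k ↔ (k : ℕ∞) ≤ (positionsWith w p a).encard := by
  rw [← Nat.cast_inj (R := ℕ∞), coe_capCount, min_eq_left_iff]

open Classical in
noncomputable def classesWith (n k : ℕ) (P : ProcTriple) (w : Exec) (θ : PType)
    (ℓ : ℕ → ℕ) : Finset ℕ :=
  (P.ofType θ).filter fun p => ∀ a < n, capCount k w p a = ℓ a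

end CappedCount

section Semantics

variable {P : ProcTriple} {w : Exec} {v : ℕ → Elem}

lemma sat_and {φ ψ : FO} : Sat P w v (φ.and ψ) ↔ Sat P w v φ ∧ Sat P w v ψ := by
  simp only [FO.and, Sat]; tauto

lemma sat_bigAnd {l : List FO} : Sat P w v (bigAnd l) ↔ ∀ ψ ∈ l, Sat P w v ψ := by
  induction l with
  | nil => simp [bigAnd, trueFO, Sat]
  | cons φ l ih => simp only [bigAnd, List.foldr_cons] at ih ⊢; simp [sat_and, ih]

lemma sat_bigOr {l : List FO} : Sat P w v (bigOr l) ↔ ∃ ψ ∈ l, Sat P w v ψ := by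
  induction l with
  | nil => simp [bigOr, trueFO, Sat]
  | cons φ l ih => simp only [bigOr, List.foldr_cons] at ih ⊢; simp [Sat, ih]

def updateList (v : ℕ → Elem) : List ℕ → List Elem → ℕ → Elem
  | x :: xs, u :: us => updateList (Function.update v x u) xs us
  | _, _ => v

lemma updateList_of_notMem (xs : List ℕ) (us : List Elem) (v : ℕ → Elem) {y : ℕ}
    (hy : y ∉ xs) : updateList v xs us y = v y := by
  induction xs generalizing us v with
  | nil => cases us <;> rfl
  | cons x xs ih =>
    cases us with
    | nil => rfl
    | cons u us =>
      rw [updateList, ih _ _ (fun h => hy (List.mem_cons_of_mem x h)),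
        Function.update_of_ne (fun h : y = x => hy (h ▸ List.mem_cons_self))]

lemma updateList_getElem (xs : List ℕ) (us : List Elem) (v : ℕ → Elem) (hn : xs.Nodup)
    (hl : us.length = xs.length) (i : ℕ) (hi : i < xs.length) :
    updateList v xs us xs[i] = us[i] := by
  induction xs generalizing us v i with
  | nil => simp at hi
  | cons x xs ih =>
    rcases us with _ | ⟨u, us⟩
    · simp at hl
    rw [List.nodup_cons] at hn
    rcases i with _ | i
    · simp [updateList, updateList_of_notMem _ _ _ hn.1]
    · exact ih us _ hn.2 (by simpa using hl) i (by simpa using hi)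

lemma sat_foldr_ex (ψ : FO) (xs : List ℕ) (v : ℕ → Elem) :
    Sat P w v (xs.foldr FO.ex ψ) ↔
      ∃ us : List Elem, us.length = xs.length ∧ (∀ u ∈ us, elemDom P w u) ∧
        Sat P w (updateList v xs us) ψ := by
  induction xs generalizing v with
  | nil =>
    refine ⟨fun h => ⟨[], rfl, by simp, h⟩, ?_⟩
    rintro ⟨_ | _, hlen, -, h⟩
    exacts [h, by simp at hlen]
  | cons x xs ih =>
    simp only [List.foldr_cons, Sat, ih]
    constructor
    · rintro ⟨u, hu, us, hlen, hdom, hsat⟩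
      exact ⟨u :: us, by simp [hlen], by simpa [hu] using hdom, hsat⟩
    · rintro ⟨_ | ⟨u, us⟩, hlen, hdom, hsat⟩
      · simp at hlen
      · simp only [List.mem_cons, forall_eq_or_imp] at hdom
        exact ⟨u, hdom.1, us, by simpa using hlen, hdom.2, hsat⟩

end Semantics

section Counting

variable {P : ProcTriple} {w : Exec} {v : ℕ → Elem}

lemma sat_exGe {m base : ℕ} {mk : ℕ → FO} {Q : Elem → Prop}
    (hmk : ∀ x, base ≤ x → ∀ v' : ℕ → Elem, (∀ y < base, v' y = v y) →
      (Sat P w v' (mk x) ↔ Q (v' x))) :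
    Sat P w v (exGe m base mk) ↔ (m : ℕ∞) ≤ {u | elemDom P w u ∧ Q u}.encard := by
  rw [← exists_nodup_iff_le_encard]
  set xs := (List.range m).map (base + ·)
  have hlen : xs.length = m := by simp [xs]
  have hlow (us : List Elem) (y : ℕ) (hy : y < base) : updateList v xs us y = v y :=
    updateList_of_notMem _ _ _ (by simp [xs]; omega)
  have hget (us : List Elem) (hus : us.length = m) (i : ℕ) (hi : i < m) :
      updateList v xs us (base + i) = us[i] := by
    have := updateList_getElem xs us v (List.nodup_range.map (fun _ _ h => by omega))
      (by omega) i (by omega)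
    simpa [xs] using this
  show Sat P w v (xs.foldr FO.ex _) ↔ _
  rw [sat_foldr_ex, hlen]
  refine exists_congr fun us => ⟨?_, ?_⟩
  · rintro ⟨hus, hdom, hsat⟩
    simp only [sat_and, sat_bigAnd, List.mem_flatMap, List.mem_map, List.mem_filter,
      List.mem_range, decide_eq_true_eq] at hsat
    refine ⟨hus, List.pairwise_iff_getElem.2 fun i j hi hj hij => ?_,
      List.forall_mem_iff_getElem.2 fun i hi => ⟨hdom _ (List.getElem_mem _), ?_⟩⟩
    · have := hsat.1 _ ⟨i, by omega, j, ⟨by omega, hij⟩, rfl⟩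
      simpa [Sat, hget us hus i (by omega), hget us hus j (by omega)] using this
    · have := hsat.2 _ ⟨i, by omega, rfl⟩
      rwa [hmk _ (by omega) _ (hlow us), hget us hus i (by omega)] at this
  · rintro ⟨hus, hnd, hQ⟩
    refine ⟨hus, fun u hu => (hQ u hu).1, ?_⟩
    simp only [sat_and, sat_bigAnd, List.mem_flatMap, List.mem_map, List.mem_filter,
      List.mem_range, decide_eq_true_eq]
    constructor
    · rintro _ ⟨i, hi, j, ⟨hj, hij⟩, rfl⟩
      simpa [Sat, hget us hus i hi, hget us hus j hj] using
        List.pairwise_iff_getElem.1 hnd i j (by omega) (by omega) hij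
    · rintro _ ⟨i, hi, rfl⟩
      rw [hmk _ (by omega) _ (hlow us), hget us hus i hi]
      exact (hQ _ (List.getElem_mem _)).2

lemma sat_exEq {m base : ℕ} {mk : ℕ → FO} {Q : Elem → Prop}
    (hmk : ∀ x, base ≤ x → ∀ v' : ℕ → Elem, (∀ y < base, v' y = v y) →
      (Sat P w v' (mk x) ↔ Q (v' x))) :
    Sat P w v (exEq m base mk) ↔ {u | elemDom P w u ∧ Q u}.encard = m := by
  rw [exEq, sat_and, Sat, sat_exGe hmk, sat_exGe hmk, Nat.cast_succ, ENat.add_one_le_iff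
    (ENat.natCast_ne_top m), not_lt]
  exact ⟨fun h => le_antisymm h.2 h.1, fun h => ⟨h.ge, h.le⟩⟩

end Counting

section Atoms

variable {P : ProcTriple} {w : Exec} {v : ℕ → Elem}

lemma sat_letterCount {y p a m B : ℕ} (hp : procOf w (v y) = some p) (hm : m ≤ B) :
    Sat P w v (if m < B then exEq m (y + 1) (fun z => (FO.sim y z).and (FO.letter a z))
      else exGe m (y + 1) (fun z => (FO.sim y z).and (FO.letter a z))) ↔
      capCount B w p a = m := by
  have hmk : ∀ x, y + 1 ≤ x → ∀ v' : ℕ → Elem, (∀ z < y + 1, v' z = v z) →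
      (Sat P w v' ((FO.sim y x).and (FO.letter a x)) ↔ v' x ∈ positionsWith w p a) := by
    intro x _ v' hv'
    simp only [sat_and, Sat, hv' y (Nat.lt_succ_self y), hp, positionsWith, Set.mem_ofPred_eq,
      Option.isSome_some, true_and, eq_comm]
  have hdom : {u | elemDom P w u ∧ u ∈ positionsWith w p a} = positionsWith w p a :=
    Set.ext fun _ => and_iff_right_of_imp fun hu => elemDom_of_letterOf_eq_some hu.2
  split_ifs with hmB
  · rw [sat_exEq hmk, hdom, capCount_eq_iff_of_lt hmB]
  · obtain rfl : m = B := by omega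
    rw [sat_exGe hmk, hdom, capCount_eq_self_iff]

lemma sat_psiCount {n B y p : ℕ} {ℓ : ℕ → ℕ} (hp : procOf w (v y) = some p)
    (hB : ∀ a < n, ℓ a ≤ B) :
    Sat P w v (psiCount n B ℓ y) ↔ ∀ a < n, capCount B w p a = ℓ a := by
  simp only [psiCount, sat_bigAnd, List.mem_map, List.mem_range, forall_exists_index, and_imp,
    forall_apply_eq_imp_iff₂]
  exact forall₂_congr fun a ha => sat_letterCount hp (hB a ha)

lemma sat_nfAtom {n B m : ℕ} {isEq : Bool} {θ : PType} {ℓ : ℕ → ℕ}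
    (hB : ∀ a < n, ℓ a ≤ B) :
    Sat P w v (nfAtom n B isEq m θ ℓ) ↔
      cmpHolds (isEq, m) (classesWith n B P w θ ℓ).card := by
  classical
  set C := classesWith n B P w θ ℓ
  have hmk : ∀ x, 0 ≤ x → ∀ v' : ℕ → Elem, (∀ z < 0, v' z = v z) →
      (Sat P w v' ((FO.ptype θ x).and (psiCount n B ℓ x)) ↔
        v' x ∈ Sum.inl '' (C : Set ℕ)) := by
    intro x _ v' _
    rw [sat_and]
    constructor
    · rintro ⟨⟨p, hx, hθ⟩, hψ⟩
      rw [sat_psiCount (by rw [hx]; rfl) hB] at hψ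
      exact ⟨p, Finset.mem_filter.2 ⟨hθ, hψ⟩, hx.symm⟩
    · rintro ⟨p, hp, hx⟩
      obtain ⟨hθ, hψ⟩ := Finset.mem_filter.1 hp
      exact ⟨⟨p, hx.symm, hθ⟩, (sat_psiCount (by rw [← hx]; rfl) hB).2 hψ⟩
  have hdom :
      {u | elemDom P w u ∧ u ∈ Sum.inl '' (C : Set ℕ)} = Sum.inl '' (C : Set ℕ) := by
    refine Set.ext fun _ => and_iff_right_of_imp ?_
    rintro ⟨p, hp, rfl⟩
    exact ProcTriple.mem_all_iff.2 ⟨θ, (Finset.mem_filter.1 hp).1⟩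
  have hcard : (Sum.inl '' (C : Set ℕ) : Set Elem).encard = C.card := by
    rw [Sum.inl_injective.encard_image, Set.encard_coe_eq_coe_finsetCard]
  cases isEq
  · rw [nfAtom, if_neg Bool.false_ne_true, sat_exGe hmk, hdom, hcard]
    simp [cmpHolds]
  · rw [nfAtom, if_pos rfl, sat_exEq hmk, hdom, hcard]
    simp [cmpHolds]

end Atoms

def FO.rank : FO → ℕ
  | .not φ => φ.rank
  | .or φ ψ => max φ.rank ψ.rank
  | .ex _ φ => φ.rank + 1
  | _ => 0

section EhrenfeuchtFraisse

variable {n k : ℕ} {P P' : ProcTriple} {w w' : Exec}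

def ClassEquiv (n k : ℕ) (P : ProcTriple) (w : Exec) (p : ℕ) (P' : ProcTriple) (w' : Exec)
    (p' : ℕ) : Prop :=
  (∀ θ, p ∈ P.ofType θ ↔ p' ∈ P'.ofType θ) ∧
    ∀ a < n, capCount k w p a = capCount k w' p' a

lemma ClassEquiv.symm {p p' : ℕ} (h : ClassEquiv n k P w p P' w' p') :
    ClassEquiv n k P' w' p' P w p :=
  ⟨fun θ => (h.1 θ).symm, fun a ha => (h.2 a ha).symm⟩

lemma ClassEquiv.mem_all {p p' : ℕ} (h : ClassEquiv n k P w p P' w' p') (hp : p ∈ P.all) :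
    p' ∈ P'.all := by
  obtain ⟨θ, hθ⟩ := ProcTriple.mem_all_iff.1 hp
  exact ProcTriple.mem_all_iff.2 ⟨θ, (h.1 θ).1 hθ⟩

lemma ClassEquiv.mem_classesWith_iff {p p' : ℕ} (h : ClassEquiv n k P w p P' w' p')
    {θ : PType} {ℓ : ℕ → ℕ} :
    p ∈ classesWith n k P w θ ℓ ↔ p' ∈ classesWith n k P' w' θ ℓ := by
  simp only [classesWith, Finset.mem_filter, h.1 θ]
  exact and_congr_right fun _ => forall₂_congr fun a ha => by rw [h.2 a ha]

def SameProfile (n k : ℕ) (P : ProcTriple) (w : Exec) (P' : ProcTriple) (w' : Exec) : Prop :=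
  ∀ θ ℓ, min k (classesWith n k P w θ ℓ).card = min k (classesWith n k P' w' θ ℓ).card

lemma SameProfile.symm (h : SameProfile n k P w P' w') : SameProfile n k P' w' P w :=
  fun θ ℓ => (h θ ℓ).symm

/-- Duplicator's invariant: a partial isomorphism that pairs only classes of the same `k`-type. -/
structure PartialIso (n k : ℕ) (P : ProcTriple) (w : Exec) (P' : ProcTriple) (w' : Exec)
    (F : List (Elem × Elem)) : Prop where
  elemDom_fst : ∀ x ∈ F, elemDom P w x.1
  elemDom_snd : ∀ x ∈ F, elemDom P' w' x.2
  letterOf_eq : ∀ x ∈ F, letterOf w x.1 = letterOf w' x.2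
  fst_eq_iff : ∀ x ∈ F, ∀ y ∈ F, x.1 = y.1 ↔ x.2 = y.2
  procOf_eq_iff : ∀ x ∈ F, ∀ y ∈ F,
    procOf w x.1 = procOf w y.1 ↔ procOf w' x.2 = procOf w' y.2
  classEquiv : ∀ x ∈ F, ∃ p p', procOf w x.1 = some p ∧ procOf w' x.2 = some p' ∧
    ClassEquiv n k P w p P' w' p'

namespace PartialIso

variable {F : List (Elem × Elem)}

lemma nil : PartialIso n k P w P' w' [] := by
  constructor <;> simp

lemma swap (hF : PartialIso n k P w P' w' F) : PartialIso n k P' w' P w (F.map Prod.swap) := by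
  refine ⟨?_, ?_, ?_, ?_, ?_, ?_⟩ <;>
    simp only [List.forall_mem_map, Prod.fst_swap, Prod.snd_swap]
  · exact hF.elemDom_snd
  · exact hF.elemDom_fst
  · exact fun x hx => (hF.letterOf_eq x hx).symm
  · exact fun x hx y hy => (hF.fst_eq_iff x hx y hy).symm
  · exact fun x hx y hy => (hF.procOf_eq_iff x hx y hy).symm
  intro x hx
  obtain ⟨p, p', hp, hp', h⟩ := hF.classEquiv x hx
  exact ⟨p', p, hp', hp, h.symm⟩

lemma of_swap (hF : PartialIso n k P' w' P w (F.map Prod.swap)) :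
    PartialIso n k P w P' w' F := by
  simpa [List.map_map] using hF.swap

lemma of_subset {G : List (Elem × Elem)} (hF : PartialIso n k P w P' w' F)
    (hGF : ∀ y ∈ G, y ∈ F) : PartialIso n k P w P' w' G :=
  ⟨fun y hy => hF.elemDom_fst y (hGF y hy), fun y hy => hF.elemDom_snd y (hGF y hy),
    fun y hy => hF.letterOf_eq y (hGF y hy),
    fun y hy z hz => hF.fst_eq_iff y (hGF y hy) z (hGF z hz),
    fun y hy z hz => hF.procOf_eq_iff y (hGF y hy) z (hGF z hz),
    fun y hy => hF.classEquiv y (hGF y hy)⟩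

lemma cons {u u' : Elem} {q q' : ℕ} (hF : PartialIso n k P w P' w' F)
    (hu : elemDom P w u) (hu' : elemDom P' w' u') (hl : letterOf w u = letterOf w' u')
    (hq : procOf w u = some q) (hq' : procOf w' u' = some q')
    (hqq' : ClassEquiv n k P w q P' w' q')
    (hlink : ∀ x ∈ F, procOf w x.1 = some q ↔ procOf w' x.2 = some q')
    (hfresh : ∀ x ∈ F, x.1 ≠ u) (hfresh' : ∀ x ∈ F, x.2 ≠ u') :
    PartialIso n k P w P' w' ((u, u') :: F) := by
  refine ⟨?_, ?_, ?_, ?_, ?_, ?_⟩ <;>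
    simp only [List.forall_mem_cons, hq, hq', true_and, iff_self]
  · exact ⟨hu, hF.elemDom_fst⟩
  · exact ⟨hu', hF.elemDom_snd⟩
  · exact ⟨hl, hF.letterOf_eq⟩
  · exact ⟨fun x hx => iff_of_false (hfresh x hx).symm (hfresh' x hx).symm,
      fun x hx => ⟨iff_of_false (hfresh x hx) (hfresh' x hx), hF.fst_eq_iff x hx⟩⟩
  · exact ⟨fun x hx => by rw [eq_comm, hlink x hx, eq_comm],
      fun x hx => ⟨hlink x hx, hF.procOf_eq_iff x hx⟩⟩
  · exact ⟨⟨q, q', rfl, rfl, hqq'⟩, hF.classEquiv⟩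

lemma ptype_of_mem (hF : PartialIso n k P w P' w' F) {x : Elem × Elem} (hx : x ∈ F)
    {θ : PType} (h : ∃ p, x.1 = .inl p ∧ p ∈ P.ofType θ) :
    ∃ p', x.2 = .inl p' ∧ p' ∈ P'.ofType θ := by
  obtain ⟨p, hp, hθ⟩ := h
  obtain ⟨q, p', hq, hp', hqp'⟩ := hF.classEquiv x hx
  obtain rfl : p = q := Option.some_inj.1 (by rw [← hq, hp]; rfl)
  refine ⟨p', eq_inl_of_letterOf_eq_none ?_ hp', (hqp'.1 θ).1 hθ⟩
  rw [← hF.letterOf_eq x hx, hp]; rfl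

lemma exists_classEquiv_of_unlinked (hprof : SameProfile n k P w P' w')
    (hF : PartialIso n k P w P' w' F) (hlen : F.length < k) {q : ℕ} {θ : PType}
    (hθ : q ∈ P.ofType θ) (hq : ∀ x ∈ F, procOf w x.1 ≠ some q) :
    ∃ q', ClassEquiv n k P w q P' w' q' ∧ ∀ x ∈ F, procOf w' x.2 ≠ some q' := by
  classical
  set C := classesWith n k P w θ (capCount k w q)
  set C' := classesWith n k P' w' θ (capCount k w q)
  set G := F.map fun x => (procOf w x.1, procOf w' x.2)
  -- The linked classes of this `k`-type correspond under `F`; on the left `q` is one more.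
  set L := (G.map Prod.fst).toFinset.filter (· ∈ C.image some)
  set R := (G.map Prod.snd).toFinset.filter (· ∈ C'.image some)
  have hLR : L.card = R.card := by
    refine card_filter_map_fst_eq ?_ ?_ <;> simp only [G, List.forall_mem_map]
    · exact hF.procOf_eq_iff
    intro x hx
    obtain ⟨p, p', hp, hp', hpp'⟩ := hF.classEquiv x hx
    simpa [hp, hp'] using hpp'.mem_classesWith_iff
  have hqL : some q ∉ L := fun h => by
    simp only [L, G, Finset.mem_filter, List.mem_toFinset, List.map_map, List.mem_map,
      Function.comp_apply] at h
    obtain ⟨⟨x, hx, hxq⟩, -⟩ := h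
    exact hq x hx hxq
  have hLC : L.card + 1 ≤ C.card := by
    rw [← Finset.card_insert_of_notMem hqL, ← Finset.card_image_of_injective C
      (Option.some_injective ℕ)]
    refine Finset.card_le_card (Finset.insert_subset (Finset.mem_image_of_mem _ ?_)
      fun o ho => (Finset.mem_filter.1 ho).2)
    exact Finset.mem_filter.2 ⟨hθ, fun _ _ => rfl⟩
  have hRC : R.card < (C'.image some).card := by
    have hLk : L.card ≤ F.length := (card_filter_toFinset_map_le G Prod.fst _).trans_eq
      (List.length_map _)
    have hCC' : min k C.card = min k C'.card := hprof θ _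
    rw [Finset.card_image_of_injective _ (Option.some_injective ℕ)]
    omega
  obtain ⟨_, hq'C, hq'R⟩ := Finset.exists_mem_notMem_of_card_lt_card hRC
  obtain ⟨q', hq', rfl⟩ := Finset.mem_image.1 hq'C
  obtain ⟨hq'θ, hq'cnt⟩ := Finset.mem_filter.1 hq'
  refine ⟨q', ⟨fun θ' => ?_, fun a ha => (hq'cnt a ha).symm⟩, fun x hx hx' => hq'R ?_⟩
  · exact ⟨fun h => ProcTriple.eq_of_mem_ofType hθ h ▸ hq'θ,
      fun h => ProcTriple.eq_of_mem_ofType hq'θ h ▸ hθ⟩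
  · simp only [R, G, Finset.mem_filter, List.mem_toFinset, List.map_map, List.mem_map]
    exact ⟨⟨x, hx, hx'⟩, hq'C⟩

lemma exists_partner_class (hprof : SameProfile n k P w P' w') (hF : PartialIso n k P w P' w' F)
    (hlen : F.length < k) {q : ℕ} (hq : q ∈ P.all) :
    ∃ q', ClassEquiv n k P w q P' w' q' ∧
      ∀ x ∈ F, procOf w x.1 = some q ↔ procOf w' x.2 = some q' := by
  by_cases hlinked : ∃ x ∈ F, procOf w x.1 = some q
  · obtain ⟨x, hx, hxq⟩ := hlinked
    obtain ⟨p, q', hp, hq', hpq'⟩ := hF.classEquiv x hx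
    obtain rfl : p = q := Option.some_inj.1 (hp.symm.trans hxq)
    exact ⟨q', hpq', fun y hy => by rw [← hp, ← hq']; exact hF.procOf_eq_iff y hy x hx⟩
  push Not at hlinked
  obtain ⟨θ, hθ⟩ := ProcTriple.mem_all_iff.1 hq
  obtain ⟨q', hqq', hq'⟩ := hF.exists_classEquiv_of_unlinked hprof hlen hθ hlinked
  exact ⟨q', hqq', fun x hx => iff_of_false (hlinked x hx) (hq' x hx)⟩

lemma exists_partner_position (hF : PartialIso n k P w P' w' F) (hlen : F.length < k)
    {u : Elem} {q q' a : ℕ} (ha : a < n) (hu : u ∈ positionsWith w q a)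
    (hfresh : ∀ x ∈ F, x.1 ≠ u) (hqq' : ClassEquiv n k P w q P' w' q')
    (hlink : ∀ x ∈ F, procOf w x.1 = some q ↔ procOf w' x.2 = some q') :
    ∃ u' ∈ positionsWith w' q' a, ∀ x ∈ F, x.2 ≠ u' := by
  classical
  set L := (F.map Prod.fst).toFinset.filter (· ∈ positionsWith w q a)
  set R := (F.map Prod.snd).toFinset.filter (· ∈ positionsWith w' q' a)
  have hLR : L.card = R.card := by
    refine card_filter_map_fst_eq hF.fst_eq_iff fun x hx => ?_
    simp only [positionsWith, Set.mem_ofPred_eq, hlink x hx, hF.letterOf_eq x hx]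
  have hLk : L.card < k := (card_filter_toFinset_map_le F Prod.fst _).trans_lt hlen
  have hL : L.card + 1 ≤ capCount k w q a := by
    have huL : u ∉ L := fun h => by
      obtain ⟨x, hx, hxu⟩ := List.mem_map.1 (List.mem_toFinset.1 (Finset.mem_filter.1 h).1)
      exact hfresh x hx hxu
    rw [le_capCount_iff (m := L.card + 1) hLk, ← Finset.card_insert_of_notMem huL,
      ← Set.encard_coe_eq_coe_finsetCard]
    refine Set.encard_le_encard fun x hx => ?_
    rcases Finset.mem_insert.1 hx with rfl | hx
    exacts [hu, (Finset.mem_filter.1 hx).2]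
  have hR : (R.card : ℕ∞) < (positionsWith w' q' a).encard := by
    rw [hLR, hqq'.2 a ha, le_capCount_iff (by omega), Nat.cast_succ] at hL
    exact ENat.add_one_le_iff (ENat.natCast_ne_top _) |>.1 hL
  obtain ⟨u', hu', hu'R⟩ := exists_mem_notMem_of_card_lt_encard R hR
  exact ⟨u', hu', fun x hx hx' =>
    hu'R (Finset.mem_filter.2 ⟨List.mem_toFinset.2 (List.mem_map.2 ⟨x, hx, hx'⟩), hu'⟩)⟩

lemma exists_partner_elem {Alph : Alphabet} (hv : w.valid Alph P)
    (hF : PartialIso Alph.n k P w P' w' F) (hlen : F.length < k) {u : Elem} {q q' : ℕ}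
    (hu : elemDom P w u) (hfresh : ∀ x ∈ F, x.1 ≠ u) (hq : procOf w u = some q)
    (hqq' : ClassEquiv Alph.n k P w q P' w' q')
    (hlink : ∀ x ∈ F, procOf w x.1 = some q ↔ procOf w' x.2 = some q') :
    ∃ u', elemDom P' w' u' ∧ letterOf w u = letterOf w' u' ∧ procOf w' u' = some q' ∧
      ∀ x ∈ F, x.2 ≠ u' := by
  rcases u with p | i
  · obtain rfl : p = q := Option.some_inj.1 hq
    refine ⟨.inl q', hqq'.mem_all hu, rfl, rfl, fun x hx hx' => hfresh x hx ?_⟩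
    refine eq_inl_of_letterOf_eq_none ?_ ((hlink x hx).2 (by rw [hx']; rfl))
    rw [hF.letterOf_eq x hx, hx']; rfl
  · obtain ⟨a, ha⟩ := Option.isSome_iff_exists.1 (letterOf_isSome_of_elemDom_inr hu)
    obtain ⟨u', hu', hfresh'⟩ := hF.exists_partner_position hlen
      (letter_lt_of_letterOf_eq_some hv ha) ⟨hq, ha⟩ hfresh hqq' hlink
    exact ⟨u', elemDom_of_letterOf_eq_some hu'.2, ha.trans hu'.2.symm, hu'.1, hfresh'⟩

lemma forth {Alph : Alphabet} (hv : w.valid Alph P) (hprof : SameProfile Alph.n k P w P' w')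
    (hF : PartialIso Alph.n k P w P' w' F) (hlen : F.length < k) {u : Elem}
    (hu : elemDom P w u) :
    ∃ u', elemDom P' w' u' ∧ PartialIso Alph.n k P w P' w' ((u, u') :: F) := by
  by_cases hmem : ∃ x ∈ F, x.1 = u
  · obtain ⟨x, hx, rfl⟩ := hmem
    exact ⟨x.2, hF.elemDom_snd x hx, hF.of_subset (by simpa using hx)⟩
  push Not at hmem
  obtain ⟨q, hq⟩ := Option.isSome_iff_exists.1 (procOf_isSome_of_elemDom hu)
  obtain ⟨q', hqq', hlink⟩ := hF.exists_partner_class hprof hlen (procOf_mem_all hv hu hq)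
  obtain ⟨u', hu', hl, hq', hfresh'⟩ := hF.exists_partner_elem hv hlen hu hmem hq hqq' hlink
  exact ⟨u', hu', hF.cons hu hu' hl hq hq' hqq' hlink hmem hfresh'⟩

end PartialIso

lemma update_mem_cons {v v' : ℕ → Elem} {x : ℕ} {u u' : Elem} {s : Finset ℕ}
    (h : ∀ y ∈ s.erase x, (v y, v' y) ∈ F) :
    ∀ y ∈ s, (Function.update v x u y, Function.update v' x u' y) ∈ (u, u') :: F := by
  intro y hy
  by_cases hyx : y = x
  · subst hyx; simp
  · rw [Function.update_of_ne hyx, Function.update_of_ne hyx]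
    exact List.mem_cons_of_mem _ (h y (Finset.mem_erase.2 ⟨hyx, hy⟩))

theorem sat_iff_of_partialIso {Alph : Alphabet} (hv : w.valid Alph P) (hv' : w'.valid Alph P')
    (hprof : SameProfile Alph.n k P w P' w') {φ : FO} (hφ : φ.onlySim) {v v' : ℕ → Elem}
    (hF : PartialIso Alph.n k P w P' w' F) (hk : F.length + φ.rank ≤ k)
    (hfree : ∀ x ∈ φ.free, (v x, v' x) ∈ F) :
    Sat P w v φ ↔ Sat P' w' v' φ := by
  induction φ generalizing F v v' with
  | ptype θ x =>
    have hx := hfree x (by simp [FO.free])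
    exact ⟨hF.ptype_of_mem hx, hF.swap.ptype_of_mem (List.mem_map_of_mem hx)⟩
  | letter a x =>
    simp only [Sat, hF.letterOf_eq _ (hfree x (by simp [FO.free]))]
  | eq x y =>
    exact hF.fst_eq_iff _ (hfree x (by simp [FO.free])) _ (hfree y (by simp [FO.free]))
  | sim x y =>
    have hx := hfree x (by simp [FO.free])
    obtain ⟨p, p', hp, hp', -⟩ := hF.classEquiv _ hx
    have := hF.procOf_eq_iff _ hx _ (hfree y (by simp [FO.free]))
    simp only [Sat, hp, hp', Option.isSome_some, true_and] at this ⊢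
    exact this
  | lt | succ => exact hφ.elim
  | not φ ih => exact not_congr (ih hφ hF hk hfree)
  | or φ ψ ih₁ ih₂ =>
    simp only [FO.rank] at hk
    exact or_congr (ih₁ hφ.1 hF (by omega) fun x hx => hfree x (by simp [FO.free, hx]))
      (ih₂ hφ.2 hF (by omega) fun x hx => hfree x (by simp [FO.free, hx]))
  | ex x φ ih =>
    simp only [FO.rank] at hk
    have hlen : F.length < k := by omega
    constructor
    · rintro ⟨u, hu, hsat⟩
      obtain ⟨u', hu', hF'⟩ := hF.forth hv hprof hlen hu
      exact ⟨u', hu', (ih hφ hF' (by simp; omega) (update_mem_cons hfree)).1 hsat⟩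
    · rintro ⟨u', hu', hsat⟩
      obtain ⟨u, hu, hF'⟩ := hF.swap.forth hv' hprof.symm (by simpa using hlen) hu'
      have hF'' : PartialIso Alph.n k P w P' w' ((u, u') :: F) :=
        PartialIso.of_swap (by simpa using hF')
      exact ⟨u, hu, (ih hφ hF'' (by simp; omega) (update_mem_cons hfree)).2 hsat⟩

theorem satS_iff_of_sameProfile {Alph : Alphabet} (hv : w.valid Alph P)
    (hv' : w'.valid Alph P') (hprof : SameProfile Alph.n k P w P' w') {φ : FO}
    (hφ : φ.onlySim) (hsen : φ.isSentence) (hk : φ.rank ≤ k) :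
    SatS P w φ ↔ SatS P' w' φ :=
  sat_iff_of_partialIso hv hv' hprof hφ .nil (by simpa using hk)
    (by simp [show φ.free = ∅ from hsen])

end EhrenfeuchtFraisse

section Profile

instance : Fintype PType :=
  ⟨{.s, .e, .se}, by intro x; cases x <;> simp⟩

variable {n k : ℕ} {P P' : ProcTriple} {w w' : Exec} {θ : PType}

def countVec (s : Fin n → Fin (k + 1)) (a : ℕ) : ℕ := if h : a < n then s ⟨a, h⟩ else 0

lemma countVec_le (s : Fin n → Fin (k + 1)) (a : ℕ) : countVec s a ≤ k := by
  unfold countVec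
  split_ifs
  exacts [Nat.lt_succ_iff.1 (s _).2, Nat.zero_le k]

noncomputable def profile (n k : ℕ) (P : ProcTriple) (w : Exec) :
    PType × (Fin n → Fin (k + 1)) → Fin (k + 1) :=
  fun c => ⟨min k (classesWith n k P w c.1 (countVec c.2)).card,
    Nat.lt_succ_of_le (min_le_left _ _)⟩

lemma classesWith_congr {ℓ ℓ' : ℕ → ℕ} (h : ∀ a < n, ℓ a = ℓ' a) :
    classesWith n k P w θ ℓ = classesWith n k P w θ ℓ' :=
  Finset.filter_congr fun p _ => forall₂_congr fun a ha => by rw [h a ha]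

lemma classesWith_eq_empty {ℓ : ℕ → ℕ} {a : ℕ} (ha : a < n) (hka : k < ℓ a) :
    classesWith n k P w θ ℓ = ∅ :=
  Finset.filter_false_of_mem fun _ _ hp => (hp a ha ▸ hka).not_ge capCount_le

lemma sameProfile_of_profile_eq (h : profile n k P w = profile n k P' w') :
    SameProfile n k P w P' w' := by
  intro θ ℓ
  by_cases hℓ : ∀ a < n, ℓ a ≤ k
  · let s : Fin n → Fin (k + 1) := fun b => ⟨ℓ b, Nat.lt_succ_of_le (hℓ b b.2)⟩
    have hs : ∀ a < n, ℓ a = countVec s a := fun a ha => by simp [s, countVec, ha]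
    rw [classesWith_congr hs, classesWith_congr hs]
    exact congrArg Fin.val (congrFun h (θ, _))
  · push Not at hℓ
    obtain ⟨a, ha, hka⟩ := hℓ
    rw [classesWith_eq_empty ha hka, classesWith_eq_empty ha hka]

/-- The atom `(⋈, m, θ, ℓ)` uses `=` when `m < k` and `≥` when `m = k`. -/
noncomputable def profileAtoms (n k : ℕ) (π : PType × (Fin n → Fin (k + 1)) → Fin (k + 1)) :
    List (Bool × ℕ × PType × (ℕ → ℕ)) :=
  Finset.univ.toList.map fun c => (decide ((π c : ℕ) < k), (π c : ℕ), c.1, countVec c.2)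

lemma cmpHolds_iff_min_eq {m N : ℕ} (hm : m ≤ k) :
    cmpHolds (decide (m < k), m) N ↔ min k N = m := by
  by_cases hmk : m < k <;> simp only [cmpHolds, hmk, decide_true, decide_false, if_true,
    Bool.false_eq_true, if_false] <;> omega

lemma sat_profileAtoms {v : ℕ → Elem} (π : PType × (Fin n → Fin (k + 1)) → Fin (k + 1)) :
    Sat P w v (bigAnd ((profileAtoms n k π).map fun atom =>
      nfAtom n k atom.1 atom.2.1 atom.2.2.1 atom.2.2.2)) ↔ profile n k P w = π := by
  simp only [sat_bigAnd, profileAtoms, List.map_map, List.forall_mem_map, Finset.mem_toList,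
    Finset.mem_univ, forall_const, Function.comp_apply, funext_iff, Fin.ext_iff]
  refine forall_congr' fun c => ?_
  rw [sat_nfAtom fun a _ => countVec_le c.2 a, cmpHolds_iff_min_eq (Nat.lt_succ_iff.1 (π c).2)]
  rfl

end Profile

/-- Normal form for FO[∼]: every sentence `φ ∈ FO_A[∼]` is, for some
threshold `B`, equivalent (over all pairs `(P, w)` of a process triple and a
`P`-execution) to a disjunction of conjunctions of formulas of the form
`∃^{⋈m} y. (θ(y) ∧ ψ_{B,ℓ}(y))` with `⋈ ∈ {≥, =}`, `m ∈ ℕ`, `θ ∈ T`, and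
`ℓ ∈ {0,…,B}^A`.  The disjunction of conjunctions is given by a list of lists of
atoms `(isEq, m, θ, ℓ)`. -/
theorem normal_form_FOsim (Alph : Alphabet) (φ : FO)
    (hsen : φ.isSentence) (hsim : φ.onlySim) :
    ∃ (B : ℕ) (dnf : List (List (Bool × ℕ × PType × (ℕ → ℕ)))),
      (∀ conj ∈ dnf, ∀ atom ∈ conj, ∀ a : ℕ, atom.2.2.2 a ≤ B) ∧
      ∀ (P : ProcTriple) (w : Exec), w.valid Alph P →
        (SatS P w φ ↔
          SatS P w (bigOr (dnf.map fun conj =>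
            bigAnd (conj.map fun atom =>
              nfAtom Alph.n B atom.1 atom.2.1 atom.2.2.1 atom.2.2.2)))) := by
  classical
  let good := Finset.univ.filter fun π =>
    ∃ P w, w.valid Alph P ∧ SatS P w φ ∧ profile Alph.n φ.rank P w = π
  refine ⟨φ.rank, good.toList.map (profileAtoms Alph.n φ.rank), ?_, fun P w hv => ?_⟩
  · simp only [List.forall_mem_map, profileAtoms]
    exact fun _ _ c _ => countVec_le c.2
  have hgood : SatS P w φ ↔ profile Alph.n φ.rank P w ∈ good := by
    refine ⟨fun h => Finset.mem_filter.2 ⟨Finset.mem_univ _, P, w, hv, h, rfl⟩, fun h => ?_⟩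
    obtain ⟨-, P₁, w₁, hv₁, hsat₁, hprof⟩ := Finset.mem_filter.1 h
    exact (satS_iff_of_sameProfile hv₁ hv (sameProfile_of_profile_eq hprof) hsim hsen
      le_rfl).1 hsat₁
  rw [hgood, SatS, sat_bigOr]
  simp only [List.map_map, List.mem_map, Finset.mem_toList, Function.comp_apply]
  constructor
  · exact fun h => ⟨_, ⟨_, h, rfl⟩, (sat_profileAtoms _).2 rfl⟩
  · rintro ⟨_, ⟨π, hπ, rfl⟩, hsat⟩
    exact (sat_profileAtoms π).1 hsat ▸ hπ

end PSyn
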